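/- arXiv:1812.03817 — 4 statements merged into one kernel-verified Lean document; each statement's English description precedes it below -/
import Mathlib

section
/- The normalizer of the subgroup R_C = Δ × {0} in the group G = (SL(2,ℂ) × SL(2,ℂ)) ⋊ ℤ/2ℤ equals the subgroup {(h, ε) ∈ G : h ∈ H, ε ∈ ℤ/2ℤ} (i.e. N_G(R_C) = H ⋊ ℤ/2ℤ). -/
/-!
The swap preserves `Δ`, so conjugating `Δ × {0}` by an element of the `ℤ/2ℤ` factor
does nothing, and `x ∈ G` normalizes `Δ × {0}` exactly when its `SL(2,ℂ) × SL(2,ℂ)`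
component `(a, b)` normalizes `Δ`. That happens iff conjugation by `a` and by `b` agree,
i.e. iff `a⁻¹ b` is central; the centre of `SL(2,ℂ)` is `{±1}`, which gives `b = ±a`.
-/

open Matrix

abbrev SL2 := Matrix.SpecialLinearGroup (Fin 2) ℂ

instance : Fact (Even (Fintype.card (Fin 2))) := ⟨by simp⟩

/-- The diagonal subgroup `R_C = Δ = {(A,A) : A ∈ SL(2,ℂ)}` of `SL(2,ℂ) × SL(2,ℂ)`. -/
def Delta : Subgroup (SL2 × SL2) where
  carrier := {p | p.2 = p.1}
  one_mem' := rfl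
  mul_mem' := by
    intro a b ha hb
    simp only [Set.mem_setOf_eq] at *
    rw [Prod.snd_mul, Prod.fst_mul, ha, hb]
  inv_mem' := by
    intro a ha
    simp only [Set.mem_setOf_eq] at *
    rw [Prod.snd_inv, Prod.fst_inv, ha]

/-- The subgroup `H = {(A, εA) : A ∈ SL(2,ℂ), ε ∈ {1,−1}}` of `SL(2,ℂ) × SL(2,ℂ)`. -/
def Hsub : Subgroup (SL2 × SL2) where
  carrier := {p | p.2 = p.1 ∨ p.2 = -p.1}
  one_mem' := Or.inl rfl
  mul_mem' := by
    intro a b ha hb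
    simp only [Set.mem_setOf_eq, Prod.snd_mul, Prod.fst_mul] at *
    rcases ha with ha | ha <;> rcases hb with hb | hb <;> rw [ha, hb] <;>
      simp [mul_neg, neg_mul, neg_neg]
  inv_mem' := by
    intro a ha
    simp only [Set.mem_setOf_eq, Prod.snd_inv, Prod.fst_inv] at *
    rcases ha with ha | ha <;> rw [ha] <;> simp [inv_neg]

/-- The swap automorphism of `SL(2,ℂ) × SL(2,ℂ)`. -/
def swapAut : MulAut (SL2 × SL2) := (MulEquiv.prodComm : (SL2 × SL2) ≃* (SL2 × SL2))

lemma swapAut_apply (p : SL2 × SL2) : swapAut p = p.swap := rfl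

lemma swapAut_sq : swapAut * swapAut = 1 := by
  apply MulEquiv.ext
  intro x
  rw [MulAut.mul_apply, swapAut_apply, swapAut_apply, Prod.swap_swap]
  rfl

/-- The homomorphism `ℤ/2ℤ →* MulAut N` determined by an automorphism of order
dividing 2, sending the nontrivial element to that automorphism. -/
def hom2 {N : Type*} [Group N] (σ : MulAut N) (h : σ * σ = 1) :
    Multiplicative (ZMod 2) →* MulAut N where
  toFun e := σ ^ (Multiplicative.toAdd e).val
  map_one' := by simp
  map_mul' a b := by
    have h2 : σ ^ 2 = 1 := by rw [pow_two]; exact h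
    show σ ^ (Multiplicative.toAdd (a * b)).val = _
    rw [toAdd_mul, ZMod.val_add, ← pow_eq_pow_mod _ h2, pow_add]

/-- The group `G = (SL(2,ℂ) × SL(2,ℂ)) ⋊ ℤ/2ℤ`, the nontrivial element of `ℤ/2ℤ`
acting by swapping the two factors. -/
abbrev Ggrp := (SL2 × SL2) ⋊[hom2 swapAut swapAut_sq] Multiplicative (ZMod 2)

lemma pow_swapAut_mem (K : Subgroup (SL2 × SL2)) (hswap : ∀ p ∈ K, Prod.swap p ∈ K) :
    ∀ (n : ℕ) (p : SL2 × SL2), p ∈ K → (swapAut ^ n) p ∈ K := by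
  intro n
  induction n with
  | zero => intro p hp; simpa using hp
  | succ m ih =>
    intro p hp
    rw [pow_succ, MulAut.mul_apply]
    exact ih _ (by rw [swapAut_apply]; exact hswap p hp)

/-- For a swap-invariant subgroup `K` of `SL(2,ℂ) × SL(2,ℂ)`, the subgroup
`{(h, ε) ∈ G : h ∈ K, ε ∈ ℤ/2ℤ} = K ⋊ ℤ/2ℤ` of `G`. -/
def liftSub (K : Subgroup (SL2 × SL2)) (hswap : ∀ p ∈ K, Prod.swap p ∈ K) :
    Subgroup Ggrp where
  carrier := {x | x.left ∈ K}
  one_mem' := by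
    show (1 : Ggrp).left ∈ K
    rw [SemidirectProduct.one_left]
    exact K.one_mem
  mul_mem' := by
    intro a b ha hb
    show (a * b).left ∈ K
    rw [SemidirectProduct.mul_left]
    exact K.mul_mem ha (pow_swapAut_mem K hswap _ _ hb)
  inv_mem' := by
    intro a ha
    show a⁻¹.left ∈ K
    rw [SemidirectProduct.inv_left]
    exact pow_swapAut_mem K hswap _ _ (K.inv_mem ha)

lemma Hsub_swap_invariant : ∀ p ∈ Hsub, Prod.swap p ∈ Hsub := by
  intro p hp
  rcases hp with h | h
  · exact Or.inl h.symm
  · exact Or.inr (by show p.1 = -p.2; rw [h, neg_neg])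

open Subgroup

theorem Subgroup.inv_mul_mem_center_iff_forall_conj_eq {N : Type*} [Group N] {a b : N} :
    a⁻¹ * b ∈ center N ↔ ∀ n, a * n * a⁻¹ = b * n * b⁻¹ := by
  rw [mem_center_iff]
  refine forall_congr' fun n => ⟨fun h => ?_, fun h => ?_⟩
  · calc a * n * a⁻¹ = a * (n * (a⁻¹ * b)) * b⁻¹ := by group
      _ = a * (a⁻¹ * b * n) * b⁻¹ := by rw [h]
      _ = b * n * b⁻¹ := by group
  · calc n * (a⁻¹ * b) = a⁻¹ * (a * n * a⁻¹) * b := by group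
      _ = a⁻¹ * (b * n * b⁻¹) * b := by rw [h]
      _ = a⁻¹ * b * n := by group

theorem Matrix.SpecialLinearGroup.mem_center_fin_two_iff {R : Type*} [CommRing R]
    [NoZeroDivisors R] {A : SpecialLinearGroup (Fin 2) R} :
    A ∈ center (SpecialLinearGroup (Fin 2) R) ↔ A = 1 ∨ A = -1 := by
  have scalar_neg_one : scalar (Fin 2) (-1 : R) = ↑(-1 : SpecialLinearGroup (Fin 2) R) := by
    rw [map_neg, map_one, SpecialLinearGroup.coe_neg, SpecialLinearGroup.coe_one]
  rw [SpecialLinearGroup.mem_center_iff, Fintype.card_fin]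
  constructor
  · rintro ⟨r, hr, hA⟩
    rcases sq_eq_one_iff.mp hr with rfl | rfl
    · exact Or.inl (Subtype.ext (hA.symm.trans (map_one _)))
    · exact Or.inr (Subtype.ext (hA.symm.trans scalar_neg_one))
  · rintro (rfl | rfl)
    · exact ⟨1, one_pow 2, map_one _⟩
    · exact ⟨-1, by norm_num, scalar_neg_one⟩

theorem SemidirectProduct.mem_normalizer_map_inl_iff {N G : Type*} [Group N] [Group G]
    {φ : G →* MulAut N} {K : Subgroup N} (hK : ∀ g, ∀ n ∈ K, φ g n ∈ K) (x : N ⋊[φ] G) :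
    x ∈ normalizer ((K.map (inl (φ := φ)) : Subgroup _) : Set (N ⋊[φ] G)) ↔
      x.left ∈ normalizer (K : Set N) := by
  set S : Subgroup (N ⋊[φ] G) := K.map inl
  have range_inr_le : inr.range ≤ normalizer (S : Set (N ⋊[φ] G)) := by
    rw [le_normalizer_iff]
    rintro _ ⟨g, rfl⟩ _ ⟨n, hn, rfl⟩
    exact ⟨φ g n, hK g n hn, by rw [inl_aut, map_inv]⟩
  have comap_inl : (normalizer (S : Set (N ⋊[φ] G))).comap inl = normalizer (K : Set N) := by
    rw [comap_normalizer_eq_of_le_range (map_le_range _ _),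
      comap_map_eq_self_of_injective inl_injective]
  rw [← comap_inl, mem_comap, ← mul_mem_cancel_right (y := inl x.left)
    (range_inr_le ⟨x.right, rfl⟩), inl_left_mul_inr_right]

theorem mem_normalizer_Delta_iff (p : SL2 × SL2) :
    p ∈ normalizer (Delta : Set (SL2 × SL2)) ↔ ∀ A, p.1 * A * p.1⁻¹ = p.2 * A * p.2⁻¹ := by
  refine ⟨fun h A => ((h (A, A)).mp rfl).symm, fun h q => ?_⟩
  change q.2 = q.1 ↔ p.2 * q.2 * p.2⁻¹ = p.1 * q.1 * p.1⁻¹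
  rw [← h, mul_left_inj, mul_right_inj]

theorem mem_Hsub_iff_inv_mul_mem_center (p : SL2 × SL2) :
    p ∈ Hsub ↔ p.1⁻¹ * p.2 ∈ center SL2 := by
  rw [SpecialLinearGroup.mem_center_fin_two_iff, inv_mul_eq_one, inv_mul_eq_iff_eq_mul,
    mul_neg_one, eq_comm (a := p.1)]
  rfl

theorem normalizer_Delta_eq_Hsub : normalizer (Delta : Set (SL2 × SL2)) = Hsub := by
  ext p
  rw [mem_normalizer_Delta_iff, mem_Hsub_iff_inv_mul_mem_center,
    inv_mul_mem_center_iff_forall_conj_eq]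

/-- **Proposition 4.6(i).** The normalizer of `R_C = Δ × {0}` in
`G = (SL(2,ℂ) × SL(2,ℂ)) ⋊ ℤ/2ℤ` equals the subgroup
`H ⋊ ℤ/2ℤ = {(h, ε) ∈ G : h ∈ H}`. -/
theorem normalizer_RC_eq_H_semidirect :
    Subgroup.normalizer ((Delta.map (SemidirectProduct.inl : (SL2 × SL2) →* Ggrp) : Set Ggrp))
      = liftSub Hsub Hsub_swap_invariant := by
  ext x
  rw [SemidirectProduct.mem_normalizer_map_inl_iff
    (fun _ n hn => pow_swapAut_mem Delta (fun _ hq => hq.symm) _ n hn), normalizer_Delta_eq_Hsub]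
  rfl
end

section
/- For every element n of the normalizer of the diagonal subgroup Δ in SL(2,ℂ) × SL(2,ℂ), there exists g ∈ Δ such that g·n lies in the maximal torus T, i.e. g·n is a pair of diagonal matrices. -/
open Matrix

/-- The maximal torus `T = {(diag(t,t⁻¹), diag(s,s⁻¹)) : t,s ∈ ℂˣ}` of
`SL(2,ℂ) × SL(2,ℂ)`, i.e. the subgroup of pairs of diagonal matrices. -/
def Tsub : Subgroup (SL2 × SL2) where
  carrier := {p | (p.1 : Matrix (Fin 2) (Fin 2) ℂ) 0 1 = 0 ∧
      (p.1 : Matrix (Fin 2) (Fin 2) ℂ) 1 0 = 0 ∧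
      (p.2 : Matrix (Fin 2) (Fin 2) ℂ) 0 1 = 0 ∧
      (p.2 : Matrix (Fin 2) (Fin 2) ℂ) 1 0 = 0}
  one_mem' := by
    simp [Set.mem_setOf_eq, Matrix.SpecialLinearGroup.coe_one, Matrix.one_apply]
  mul_mem' := by
    intro a b ha hb
    obtain ⟨h1, h2, h3, h4⟩ := ha
    obtain ⟨g1, g2, g3, g4⟩ := hb
    refine ⟨?_, ?_, ?_, ?_⟩ <;>
      simp [Prod.fst_mul, Prod.snd_mul, Matrix.SpecialLinearGroup.coe_mul, Matrix.mul_apply,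
        Fin.sum_univ_two, h1, h2, h3, h4, g1, g2, g3, g4]
  inv_mem' := by
    intro a ha
    obtain ⟨h1, h2, h3, h4⟩ := ha
    refine ⟨?_, ?_, ?_, ?_⟩ <;>
      simp [Prod.fst_inv, Prod.snd_inv, Matrix.SpecialLinearGroup.coe_inv,
        Matrix.adjugate_fin_two, h1, h2, h3, h4]

/-! Conjugating `(A, A)` by `n` stays in `Δ` exactly when `n.1⁻¹ * n.2` commutes with `A`, so
for `n` in the normalizer this element is central in `SL(2,ℂ)`, hence scalar. Translating `n` by
`(n.1⁻¹, n.1⁻¹) ∈ Δ` therefore gives `(1, n.1⁻¹ * n.2)`, a pair of diagonal matrices. -/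

namespace Matrix.SpecialLinearGroup

variable {ι R : Type*} [DecidableEq ι] [Fintype ι] [CommRing R]

theorem apply_eq_zero_of_mem_center {A : SpecialLinearGroup ι R}
    (hA : A ∈ Subgroup.center (SpecialLinearGroup ι R)) {i j : ι} (hij : i ≠ j) :
    A i j = 0 := by
  rw [← scalar_eq_self_of_mem_center hA i, scalar_apply, diagonal_apply_ne _ hij]

end Matrix.SpecialLinearGroup

theorem inv_mul_mem_center_of_mem_normalizer_delta {n : SL2 × SL2}
    (hn : n ∈ Subgroup.normalizer (Delta : Set (SL2 × SL2))) :
    n.1⁻¹ * n.2 ∈ Subgroup.center SL2 := by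
  refine Subgroup.mem_center_iff.mpr fun A ↦ ?_
  have hconj : n.2 * A * n.2⁻¹ = n.1 * A * n.1⁻¹ :=
    (Subgroup.mem_normalizer_iff.mp hn (A, A)).1 rfl
  calc A * (n.1⁻¹ * n.2) = n.1⁻¹ * (n.1 * A * n.1⁻¹) * n.2 := by group
    _ = n.1⁻¹ * (n.2 * A * n.2⁻¹) * n.2 := by rw [hconj]
    _ = n.1⁻¹ * n.2 * A := by group

theorem mk_mem_tsub_of_mem_center {A C : SL2} (hA : A ∈ Subgroup.center SL2)
    (hC : C ∈ Subgroup.center SL2) : (A, C) ∈ Tsub :=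
  ⟨SpecialLinearGroup.apply_eq_zero_of_mem_center hA (by decide),
    SpecialLinearGroup.apply_eq_zero_of_mem_center hA (by decide),
    SpecialLinearGroup.apply_eq_zero_of_mem_center hC (by decide),
    SpecialLinearGroup.apply_eq_zero_of_mem_center hC (by decide)⟩

/-- **Claim (Proposition 4.6 in the paper).** For every element `n` of the normalizer of
the diagonal subgroup `Δ` in `SL(2,ℂ) × SL(2,ℂ)` there exists `g ∈ Δ` such that `g·n`
lies in the maximal torus `T` of pairs of diagonal matrices. -/
theorem exists_diag_translate_of_mem_normalizer_delta
    (n : SL2 × SL2) (hn : n ∈ Subgroup.normalizer (Delta : Set (SL2 × SL2))) :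
    ∃ g ∈ Delta, g * n ∈ Tsub := by
  refine ⟨(n.1⁻¹, n.1⁻¹), rfl, ?_⟩
  have htranslate : (n.1⁻¹, n.1⁻¹) * n = (1, n.1⁻¹ * n.2) :=
    Prod.ext (inv_mul_cancel n.1) rfl
  rw [htranslate]
  exact mk_mem_tsub_of_mem_center (Subgroup.one_mem _)
    (inv_mul_mem_center_of_mem_normalizer_delta hn)
end

section
/- The Weyl group of G: the quotient of the normalizer of the maximal torus T × {0} in G = (SL(2,ℂ) × SL(2,ℂ)) ⋊ ℤ/2ℤ by T × {0} is isomorphic to the dihedral group of order 8 (DihedralGroup 4 in Mathlib). -/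
open Matrix

/-- The maximal torus `T × {0}` of `G`. -/
def TG : Subgroup Ggrp := Tsub.map (SemidirectProduct.inl : (SL2 × SL2) →* Ggrp)

/-! An element of the normalizer of `T × {0}` has monomial (diagonal or antidiagonal)
`SL(2,ℂ)`-components: conjugating the regular element `diag(2, 1/2)` into the diagonal already
forces this, and the swap preserves `T`. Recording which components are antidiagonal, together
with the `ℤ/2ℤ`-component, is a homomorphism onto `(ℤ/2ℤ)² ⋊ ℤ/2ℤ ≅ D₄` with kernel `T × {0}`. -/

theorem ZMod.eq_zero_or_eq_one (k : ZMod 2) : k = 0 ∨ k = 1 := by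
  revert k
  decide

namespace Subgroup

variable {G H : Type*} [Group G] [Group H]

theorem normalizer_prod (S : Subgroup G) (T : Subgroup H) :
    normalizer (S.prod T : Set (G × H)) =
      (normalizer (S : Set G)).prod (normalizer (T : Set H)) := by
  ext ⟨g, h⟩
  simp only [mem_prod, mem_normalizer_iff, Prod.forall, Prod.mk_mul_mk, Prod.inv_mk]
  constructor
  · intro hgh
    exact ⟨fun s ↦ by simpa using hgh s 1, fun t ↦ by simpa using hgh 1 t⟩
  · exact fun ⟨hg, hh⟩ s t ↦ and_congr (hg s) (hh t)

end Subgroup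

namespace SemidirectProduct

open Subgroup

variable {N G : Type*} [Group N] [Group G] {φ : G →* MulAut N}

theorem inr_mem_normalizer_map_inl {S : Subgroup N} (hS : ∀ g, ∀ s ∈ S, φ g s ∈ S) (g : G) :
    inr g ∈ normalizer (S.map (inl : N →* N ⋊[φ] G) : Set (N ⋊[φ] G)) := by
  have hconj : (MulAut.conj (inr g : N ⋊[φ] G) : N ⋊[φ] G →* N ⋊[φ] G).comp inl =
      inl.comp (φ g : N →* N) :=
    MonoidHom.ext fun n ↦ by simp [inl_aut]
  have hSg : S.map (φ g : N →* N) = S := by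
    refine le_antisymm (map_le_iff_le_comap.mpr fun s hs ↦ hS g s hs) fun s hs ↦ ?_
    exact ⟨(φ g)⁻¹ s, map_inv φ g ▸ hS g⁻¹ s hs, by simp⟩
  rw [mem_normalizer_iff_map_conj_eq, Subgroup.map_map, hconj, ← Subgroup.map_map, hSg]

theorem mem_normalizer_map_inl_iff_s4 {S : Subgroup N} (hS : ∀ g, ∀ s ∈ S, φ g s ∈ S)
    (x : N ⋊[φ] G) :
    x ∈ normalizer (S.map (inl : N →* N ⋊[φ] G) : Set (N ⋊[φ] G)) ↔
      x.left ∈ normalizer (S : Set N) := by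
  have hinl : (normalizer (S.map (inl : N →* N ⋊[φ] G) : Set (N ⋊[φ] G))).comap inl =
      normalizer (S : Set N) := by
    rw [comap_normalizer_eq_of_le_range (map_le_range _ _),
      comap_map_eq_self_of_injective inl_injective]
  nth_rw 1 [← inl_left_mul_inr_right x]
  rw [Subgroup.mul_mem_cancel_right _ (inr_mem_normalizer_map_inl hS _), ← hinl, mem_comap]

theorem mem_map_inl_iff {S : Subgroup N} {x : N ⋊[φ] G} :
    x ∈ S.map (inl : N →* N ⋊[φ] G) ↔ x.left ∈ S ∧ x.right = 1 := by
  constructor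
  · rintro ⟨s, hs, rfl⟩
    exact ⟨hs, rfl⟩
  · rintro ⟨hs, hr⟩
    exact ⟨x.left, hs, SemidirectProduct.ext rfl hr.symm⟩

end SemidirectProduct

theorem hom2_apply_eq_ite {N : Type*} [Group N] (σ : MulAut N) (h : σ * σ = 1)
    (e : Multiplicative (ZMod 2)) :
    hom2 σ h e = if Multiplicative.toAdd e = 0 then 1 else σ := by
  change σ ^ (Multiplicative.toAdd e).val = _
  obtain he | he := ZMod.eq_zero_or_eq_one (Multiplicative.toAdd e) <;>
    simp [he, ZMod.val_one'' (show 2 ≠ 1 by decide)]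

namespace Matrix.SpecialLinearGroup

open MatrixGroups Subgroup

variable {K : Type*} [Field K]

theorem det_fin_two_eq_one (A : SL(2, K)) : A 0 0 * A 1 1 - A 0 1 * A 1 0 = 1 := by
  have hdet := A.det_coe
  rwa [det_fin_two] at hdet

variable (K) in
def diagonalSubgroup : Subgroup SL(2, K) where
  carrier := {A | A 0 1 = 0 ∧ A 1 0 = 0}
  one_mem' := by simp
  mul_mem' := by
    rintro A B ⟨hA₀, hA₁⟩ ⟨hB₀, hB₁⟩
    simp [mul_apply, Fin.sum_univ_two, hA₀, hA₁, hB₀, hB₁]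
  inv_mem' := by
    rintro A ⟨hA₀, hA₁⟩
    simp [coe_inv, adjugate_fin_two, hA₀, hA₁]

theorem mem_diagonalSubgroup_iff {A : SL(2, K)} :
    A ∈ diagonalSubgroup K ↔ A 0 1 = 0 ∧ A 1 0 = 0 := Iff.rfl

def IsMonomial (A : SL(2, K)) : Prop :=
  A ∈ diagonalSubgroup K ∨ (A 0 0 = 0 ∧ A 1 1 = 0)

theorem diagonal_entries_ne_zero_of_apply_zero_one_eq_zero {A : SL(2, K)} (h : A 0 1 = 0) :
    A 0 0 ≠ 0 ∧ A 1 1 ≠ 0 := by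
  have hdet := det_fin_two_eq_one A
  rw [h, zero_mul, sub_zero] at hdet
  exact mul_ne_zero_iff.mp (by rw [hdet]; exact one_ne_zero)

theorem antidiagonal_entries_ne_zero_of_apply_zero_zero_eq_zero {A : SL(2, K)} (h : A 0 0 = 0) :
    A 0 1 ≠ 0 ∧ A 1 0 ≠ 0 := by
  have hdet := det_fin_two_eq_one A
  rw [h, zero_mul, zero_sub, neg_eq_iff_eq_neg] at hdet
  exact mul_ne_zero_iff.mp (hdet ▸ neg_ne_zero.mpr one_ne_zero)

theorem isMonomial_of_mul_eq_zero {A : SL(2, K)} (h₀ : A 0 0 * A 0 1 = 0)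
    (h₁ : A 1 0 * A 1 1 = 0) : IsMonomial A := by
  have hdet := det_fin_two_eq_one A
  rcases mul_eq_zero.mp h₀ with h₀ | h₀ <;> rcases mul_eq_zero.mp h₁ with h₁ | h₁
  · simp [h₀, h₁] at hdet
  · exact Or.inr ⟨h₀, h₁⟩
  · exact Or.inl ⟨h₀, h₁⟩
  · simp [h₀, h₁] at hdet

theorem IsMonomial.inv {A : SL(2, K)} (hA : IsMonomial A) : IsMonomial A⁻¹ := by
  rcases hA with hA | ⟨h₀, h₁⟩
  · exact Or.inl (inv_mem hA)
  · exact Or.inr (by simp [coe_inv, adjugate_fin_two, h₀, h₁])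

theorem IsMonomial.conj_mem {A t : SL(2, K)} (hA : IsMonomial A) (ht : t ∈ diagonalSubgroup K) :
    A * t * A⁻¹ ∈ diagonalSubgroup K := by
  obtain ⟨ht₀, ht₁⟩ := ht
  rcases hA with ⟨h₀, h₁⟩ | ⟨h₀, h₁⟩ <;>
    simp [mem_diagonalSubgroup_iff, coe_inv, adjugate_fin_two, mul_apply, Fin.sum_univ_two,
      h₀, h₁, ht₀, ht₁]

theorem isMonomial_of_conj_diag2_mem {a : K} (ha : a ≠ 0) (ha₂ : a ^ 2 ≠ 1) {A : SL(2, K)}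
    (h : A * diag2 a ha * A⁻¹ ∈ diagonalSubgroup K) : IsMonomial A := by
  have hsub : a - a⁻¹ ≠ 0 := by
    rw [sub_ne_zero]
    intro h
    apply ha₂
    rw [sq]
    nth_rw 2 [h]
    exact mul_inv_cancel₀ ha
  have e₀ : (A * diag2 a ha * A⁻¹) 0 1 = A 0 0 * A 0 1 * -(a - a⁻¹) := by
    simp only [coe_mul, diag2_coe', coe_inv, adjugate_fin_two, mul_apply, of_apply, cons_val',
      cons_val_fin_one, Fin.sum_univ_two, cons_val_zero, cons_val_one]
    ring
  have e₁ : (A * diag2 a ha * A⁻¹) 1 0 = A 1 0 * A 1 1 * (a - a⁻¹) := by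
    simp only [coe_mul, diag2_coe', coe_inv, adjugate_fin_two, mul_apply, of_apply, cons_val',
      cons_val_fin_one, Fin.sum_univ_two, cons_val_zero, cons_val_one]
    ring
  obtain ⟨h₀, h₁⟩ := h
  rw [e₀] at h₀
  rw [e₁] at h₁
  exact isMonomial_of_mul_eq_zero ((mul_eq_zero.mp h₀).resolve_right (neg_ne_zero.mpr hsub))
    ((mul_eq_zero.mp h₁).resolve_right hsub)

theorem diag2_mem_diagonalSubgroup {a : K} (ha : a ≠ 0) : diag2 a ha ∈ diagonalSubgroup K := by
  simp [mem_diagonalSubgroup_iff, diag2_coe']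

theorem mem_normalizer_diagonalSubgroup_iff {a : K} (ha : a ≠ 0) (ha₂ : a ^ 2 ≠ 1)
    {A : SL(2, K)} : A ∈ normalizer (diagonalSubgroup K : Set SL(2, K)) ↔ IsMonomial A := by
  refine ⟨fun hA ↦ isMonomial_of_conj_diag2_mem ha ha₂ ?_, fun hA ↦ ?_⟩
  · exact (mem_normalizer_iff.mp hA _).mp (diag2_mem_diagonalSubgroup ha)
  · refine mem_normalizer_iff.mpr fun t ↦ ⟨hA.conj_mem, fun ht ↦ ?_⟩
    simpa [mul_assoc] using hA.inv.conj_mem ht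

open Classical in
/-- The image of `A` in the Weyl group `ℤ/2ℤ` of `SL(2, K)`, for monomial `A`. -/
noncomputable def weylBit (A : SL(2, K)) : ZMod 2 :=
  if A 0 1 = 0 then 0 else 1

theorem IsMonomial.weylBit_eq_zero_iff {A : SL(2, K)} (hA : IsMonomial A) :
    weylBit A = 0 ↔ A ∈ diagonalSubgroup K := by
  rcases hA with hA | ⟨h₀, -⟩
  · simp [weylBit, hA.1, hA]
  · simp [weylBit, mem_diagonalSubgroup_iff,
      (antidiagonal_entries_ne_zero_of_apply_zero_zero_eq_zero h₀).1]

theorem IsMonomial.weylBit_mul {A B : SL(2, K)} (hA : IsMonomial A) (hB : IsMonomial B) :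
    weylBit (A * B) = weylBit A + weylBit B := by
  have hAB : (A * B) 0 1 = A 0 0 * B 0 1 + A 0 1 * B 1 1 := by
    simp [mul_apply, Fin.sum_univ_two]
  rcases hA with ⟨hA₀, hA₁⟩ | ⟨hA₀, hA₁⟩ <;> rcases hB with ⟨hB₀, hB₁⟩ | ⟨hB₀, hB₁⟩
  · simp [weylBit, hAB, hA₀, hB₀]
  · simp [weylBit, hAB, hA₀, hB₁, (diagonal_entries_ne_zero_of_apply_zero_one_eq_zero hA₀).1,
      (antidiagonal_entries_ne_zero_of_apply_zero_zero_eq_zero hB₀).1]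
  · simp [weylBit, hAB, hB₀, (diagonal_entries_ne_zero_of_apply_zero_one_eq_zero hB₀).2,
      (antidiagonal_entries_ne_zero_of_apply_zero_zero_eq_zero hA₀).1]
  · simp [weylBit, hAB, hA₀, hB₁, (antidiagonal_entries_ne_zero_of_apply_zero_zero_eq_zero hA₀).1,
      (antidiagonal_entries_ne_zero_of_apply_zero_zero_eq_zero hB₀).1,
      show (1 : ZMod 2) + 1 = 0 from rfl]

variable (K) in
def weylElement : SL(2, K) := ⟨!![0, 1; -1, 0], by simp [det_fin_two_of]⟩

theorem coe_weylElement : (weylElement K : Matrix (Fin 2) (Fin 2) K) = !![0, 1; -1, 0] := rfl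

theorem isMonomial_weylElement_pow (k : ZMod 2) : IsMonomial (weylElement K ^ k.val) := by
  obtain rfl | rfl := ZMod.eq_zero_or_eq_one k
  · exact Or.inl (by simp)
  · exact Or.inr (by simp [ZMod.val_one'' (show 2 ≠ 1 by decide), coe_weylElement])

theorem weylBit_weylElement_pow (k : ZMod 2) : weylBit (weylElement K ^ k.val) = k := by
  obtain rfl | rfl := ZMod.eq_zero_or_eq_one k
  · simp [weylBit, ZMod.val_zero]
  · simp [weylBit, ZMod.val_one'' (show 2 ≠ 1 by decide), coe_weylElement]

end Matrix.SpecialLinearGroup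

open Matrix.SpecialLinearGroup SemidirectProduct Subgroup DihedralGroup

theorem hom2_swapAut_apply (e : Multiplicative (ZMod 2)) (p : SL2 × SL2) :
    hom2 swapAut swapAut_sq e p = if Multiplicative.toAdd e = 0 then p else p.swap := by
  rw [hom2_apply_eq_ite]
  split_ifs <;> rfl

theorem Tsub_eq_prod : Tsub = (diagonalSubgroup ℂ).prod (diagonalSubgroup ℂ) := by
  ext p
  exact and_assoc.symm

theorem hom2_swapAut_mem_Tsub (e : Multiplicative (ZMod 2)) :
    ∀ p ∈ Tsub, hom2 swapAut swapAut_sq e p ∈ Tsub := by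
  rintro p ⟨h₁, h₂, h₃, h₄⟩
  rw [hom2_swapAut_apply]
  split_ifs
  exacts [⟨h₁, h₂, h₃, h₄⟩, ⟨h₃, h₄, h₁, h₂⟩]

theorem mem_TG_iff {x : Ggrp} : x ∈ TG ↔ x.left ∈ Tsub ∧ x.right = 1 :=
  mem_map_inl_iff

theorem mem_normalizer_TG_iff (x : Ggrp) :
    x ∈ normalizer (TG : Set Ggrp) ↔ IsMonomial x.left.1 ∧ IsMonomial x.left.2 := by
  have h2 : (2 : ℂ) ^ 2 ≠ 1 := by norm_num
  rw [TG, mem_normalizer_map_inl_iff_s4 hom2_swapAut_mem_Tsub, Tsub_eq_prod, normalizer_prod,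
    mem_prod, mem_normalizer_diagonalSubgroup_iff two_ne_zero h2,
    mem_normalizer_diagonalSubgroup_iff two_ne_zero h2]

/-- `sr 0` and `sr 2` are commuting reflections exchanged by conjugation with `sr 1`, which
exhibits `DihedralGroup 4` as `(ℤ/2ℤ × ℤ/2ℤ) ⋊ ℤ/2ℤ`, with `sr 1` swapping the two factors. -/
def dihedralWord (a b c : ZMod 2) : DihedralGroup 4 :=
  sr 0 ^ a.val * sr 2 ^ b.val * sr 1 ^ c.val

theorem dihedralWord_mul : ∀ a b c a' b' c' : ZMod 2,
    dihedralWord a b c * dihedralWord a' b' c' =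
      dihedralWord (a + if c = 0 then a' else b') (b + if c = 0 then b' else a') (c + c') := by
  decide

theorem dihedralWord_eq_one_iff : ∀ a b c : ZMod 2,
    dihedralWord a b c = 1 ↔ a = 0 ∧ b = 0 ∧ c = 0 := by
  decide

theorem dihedralWord_surjective :
    ∀ g : DihedralGroup 4, ∃ a b c : ZMod 2, dihedralWord a b c = g := by
  decide

noncomputable def weylHom : normalizer (TG : Set Ggrp) →* DihedralGroup 4 where
  toFun x :=
    dihedralWord (weylBit x.1.left.1) (weylBit x.1.left.2) (Multiplicative.toAdd x.1.right)
  map_one' := (dihedralWord_eq_one_iff _ _ _).mpr ⟨by simp [weylBit], by simp [weylBit], rfl⟩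
  map_mul' x y := by
    obtain ⟨hx₁, hx₂⟩ := (mem_normalizer_TG_iff _).mp x.2
    obtain ⟨hy₁, hy₂⟩ := (mem_normalizer_TG_iff _).mp y.2
    simp only [Subgroup.coe_mul, mul_left, mul_right, hom2_swapAut_apply, toAdd_mul,
      dihedralWord_mul]
    split_ifs
    · simp only [Prod.fst_mul, Prod.snd_mul, hx₁.weylBit_mul hy₁, hx₂.weylBit_mul hy₂]
    · simp only [Prod.fst_mul, Prod.snd_mul, Prod.fst_swap, Prod.snd_swap, hx₁.weylBit_mul hy₂,
        hx₂.weylBit_mul hy₁]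

theorem weylHom_ker : weylHom.ker = TG.subgroupOf (normalizer (TG : Set Ggrp)) := by
  ext x
  obtain ⟨hx₁, hx₂⟩ := (mem_normalizer_TG_iff _).mp x.2
  rw [MonoidHom.mem_ker, mem_subgroupOf, mem_TG_iff, Tsub_eq_prod, mem_prod,
    ← hx₁.weylBit_eq_zero_iff, ← hx₂.weylBit_eq_zero_iff, ← toAdd_eq_zero, and_assoc]
  exact dihedralWord_eq_one_iff _ _ _

theorem weylHom_surjective : Function.Surjective weylHom := by
  intro g
  obtain ⟨a, b, c, rfl⟩ := dihedralWord_surjective g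
  refine ⟨⟨⟨(weylElement ℂ ^ a.val, weylElement ℂ ^ b.val), Multiplicative.ofAdd c⟩,
    (mem_normalizer_TG_iff _).mpr
      ⟨isMonomial_weylElement_pow a, isMonomial_weylElement_pow b⟩⟩, ?_⟩
  simp [weylHom, weylBit_weylElement_pow]

/-- **The Weyl group of `G` is the dihedral group of order 8:** the quotient of the
normalizer of the maximal torus `T × {0}` in `G = (SL(2,ℂ) × SL(2,ℂ)) ⋊ ℤ/2ℤ` by
`T × {0}` is isomorphic to `DihedralGroup 4`. -/
theorem weyl_group_iso_dihedral :
    Nonempty ((Subgroup.normalizer (TG : Set Ggrp) ⧸ TG.subgroupOf (Subgroup.normalizer (TG : Set Ggrp))) ≃* DihedralGroup 4) :=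
  ⟨(QuotientGroup.quotientMulEquivOfEq weylHom_ker.symm).trans
    (QuotientGroup.quotientKerEquivOfSurjective weylHom weylHom_surjective)⟩
end

section
/- All semistable A-curves are equivalent to C_{2A₅}: for all a, b ∈ ℂˣ there exist t, s, λ ∈ ℂˣ such that the ℂ-algebra endomorphism of ℂ[x₀,x₁,y₀,y₁] determined by x₀ ↦ t·x₀, x₁ ↦ t⁻¹·x₁, y₀ ↦ s·y₀, y₁ ↦ s⁻¹·y₁ sends the polynomial x₀³y₀y₁² + x₁³y₀²y₁ to λ·(a·x₀³y₀y₁² + b·x₁³y₀²y₁). -/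
open MvPolynomial

/-- **All semistable A-curves are equivalent to `C_{2A₅}`.** For all `a b : ℂˣ` there
exist `t s λ : ℂˣ` such that the ℂ-algebra endomorphism of `ℂ[x₀,x₁,y₀,y₁]`
(variables `X 0 = x₀`, `X 1 = x₁`, `X 2 = y₀`, `X 3 = y₁`) determined by
`x₀ ↦ t·x₀`, `x₁ ↦ t⁻¹·x₁`, `y₀ ↦ s·y₀`, `y₁ ↦ s⁻¹·y₁` sends
`x₀³y₀y₁² + x₁³y₀²y₁` to `λ·(a·x₀³y₀y₁² + b·x₁³y₀²y₁)`. -/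
theorem aCurves_equivalent_to_C2A5 (a b : ℂˣ) :
    ∃ t s lam : ℂˣ,
      aeval ![C (t : ℂ) * X 0, C ((t⁻¹ : ℂˣ) : ℂ) * X 1,
              C (s : ℂ) * X 2, C ((s⁻¹ : ℂˣ) : ℂ) * X 3]
          (X 0 ^ 3 * X 2 * X 3 ^ 2 + X 1 ^ 3 * X 2 ^ 2 * X 3 : MvPolynomial (Fin 4) ℂ)
        = C (lam : ℂ) * (C (a : ℂ) * X 0 ^ 3 * X 2 * X 3 ^ 2
            + C (b : ℂ) * X 1 ^ 3 * X 2 ^ 2 * X 3) := by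
  have hab : ((a : ℂ) * (b : ℂ)) ≠ 0 := mul_ne_zero a.ne_zero b.ne_zero
  obtain ⟨z, hz⟩ : ∃ z : ℂ, z ^ 2 = (((a : ℂ) * (b : ℂ))⁻¹) :=
    IsAlgClosed.exists_pow_nat_eq _ two_pos
  have h1 : z ^ 2 * ((a : ℂ) * (b : ℂ)) = 1 := by
    rw [hz]; exact inv_mul_cancel₀ hab
  have hz0 : z ≠ 0 := by
    intro h; rw [h] at h1; norm_num at h1
  refine ⟨1, (Units.mk0 z hz0 * a)⁻¹, Units.mk0 z hz0, ?_⟩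
  have hs : ((((Units.mk0 z hz0 * a)⁻¹ : ℂˣ)⁻¹ : ℂˣ) : ℂ) = z * a := by simp
  have hs2 : (((Units.mk0 z hz0 * a)⁻¹ : ℂˣ) : ℂ) = z * b := by
    rw [Units.val_inv_eq_inv_val, Units.val_mul, Units.val_mk0]
    exact inv_eq_of_mul_eq_one_right (by linear_combination h1)
  simp only [map_add, map_mul, map_pow, aeval_X]
  simp only [Matrix.cons_val_zero, Matrix.cons_val_one, Matrix.head_cons,
    Matrix.cons_val_two, Matrix.tail_cons, Matrix.cons_val_three]
  rw [hs, hs2]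
  simp only [inv_one, Units.val_one, map_one, map_mul, Units.val_mk0]
  have hC : (C z : MvPolynomial ℕ ℂ) ^ 2 * (C (a : ℂ) * C (b : ℂ)) = 1 := by
    rw [← C_pow, ← C_mul, ← C_mul, h1, C_1]
  have h2 : (C z * C (a : ℂ) * X 0 ^ 3 * X 2 * X 3 ^ 2
      + C z * C (b : ℂ) * X 2 ^ 2 * X 3 * X 1 ^ 3 : MvPolynomial ℕ ℂ)
      * ((C z ^ 2 * (C (a : ℂ) * C (b : ℂ)) : MvPolynomial ℕ ℂ) - 1) = 0 := by
    rw [hC, sub_self, mul_zero]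
  linear_combination h2
end
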